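/- arXiv:1004.2872 — 5 statements merged into one kernel-verified Lean document; each statement's English description precedes it below -/
import Mathlib

section
/- The maps S_{a₁a₂b₁b₂} = (1/√3)(R_{a₁b₁a₂b₂} + R_{a₁b₂a₂b₁}) and R_{a₁b₁a₂b₂} = (1/√3)(S_{a₁a₂b₁b₂} − S_{a₁b₂b₁a₂}) define mutually inverse linear isomorphisms between the space of algebraic curvature tensors and the space of symmetrised algebraic curvature tensors on V. -/
/-- Algebraic curvature tensor symmetries. -/
def IsACT {n : ℕ} (R : Fin n → Fin n → Fin n → Fin n → ℝ) : Prop :=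
  (∀ a b c d, R b a c d = -R a b c d) ∧
  (∀ a b c d, R a b d c = -R a b c d) ∧
  (∀ a b c d, R c d a b = R a b c d) ∧
  (∀ a b c d, R a b c d + R a c d b + R a d b c = 0)

/-- Symmetrised algebraic curvature tensor symmetries. -/
def IsSACT {n : ℕ} (S : Fin n → Fin n → Fin n → Fin n → ℝ) : Prop :=
  (∀ a b c d, S b a c d = S a b c d) ∧
  (∀ a b c d, S a b d c = S a b c d) ∧
  (∀ a b c d, S c d a b = S a b c d) ∧
  (∀ a b c d, S a b c d + S a d b c + S a c d b = 0)

/-- S_{a₁a₂b₁b₂} = (1/√3)(R_{a₁b₁a₂b₂} + R_{a₁b₂a₂b₁}). -/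
noncomputable def toSym {n : ℕ} (R : Fin n → Fin n → Fin n → Fin n → ℝ) :
    Fin n → Fin n → Fin n → Fin n → ℝ :=
  fun a₁ a₂ b₁ b₂ => (Real.sqrt 3)⁻¹ * (R a₁ b₁ a₂ b₂ + R a₁ b₂ a₂ b₁)

/-- R_{a₁b₁a₂b₂} = (1/√3)(S_{a₁a₂b₁b₂} − S_{a₁b₂b₁a₂}). -/
noncomputable def toCurv {n : ℕ} (S : Fin n → Fin n → Fin n → Fin n → ℝ) :
    Fin n → Fin n → Fin n → Fin n → ℝ :=
  fun a₁ b₁ a₂ b₂ => (Real.sqrt 3)⁻¹ * (S a₁ a₂ b₁ b₂ - S a₁ b₂ b₁ a₂)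

/-!
Each composite of the two maps sends a tensor `T` to one third of `2 T` minus the other two
terms of a cyclic sum of `T`; by the cyclic identity of the source space that sum vanishes,
which leaves `3 T / 3 = T`. The symmetries of the images are linear combinations of the
symmetries of the source.
-/

section

variable {n : ℕ}

lemma inv_sqrt_three_mul_self : (Real.sqrt 3)⁻¹ * (Real.sqrt 3)⁻¹ = (3 : ℝ)⁻¹ := by
  rw [← mul_inv, Real.mul_self_sqrt (by norm_num)]

lemma toCurv_toSym_apply (R : Fin n → Fin n → Fin n → Fin n → ℝ) (a b c d : Fin n) :
    toCurv (toSym R) a b c d = 3⁻¹ * (R a b c d + R a d c b - R a b d c - R a c d b) := by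
  simp only [toCurv, toSym]
  linear_combination (R a b c d + R a d c b - R a b d c - R a c d b) * inv_sqrt_three_mul_self

lemma toSym_toCurv_apply (S : Fin n → Fin n → Fin n → Fin n → ℝ) (a b c d : Fin n) :
    toSym (toCurv S) a b c d = 3⁻¹ * (S a b c d + S a b d c - S a d c b - S a c d b) := by
  simp only [toCurv, toSym]
  linear_combination (S a b c d + S a b d c - S a d c b - S a c d b) * inv_sqrt_three_mul_self

lemma isSACT_toSym {R : Fin n → Fin n → Fin n → Fin n → ℝ} (hR : IsACT R) :
    IsSACT (toSym R) := by
  obtain ⟨anti₁, anti₂, pair, bianchi⟩ := hR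
  set s := (Real.sqrt 3)⁻¹
  refine ⟨fun a b c d => ?_, fun a b c d => ?_, fun a b c d => ?_, fun a b c d => ?_⟩ <;>
    simp only [toSym]
  · linear_combination (-s) * pair b c a d - s * pair b d a c
  · ring
  · linear_combination s * anti₁ c a d b - s * anti₂ a c b d + s * anti₁ c b d a -
      s * anti₂ b c a d - s * pair b c a d
  · linear_combination s * bianchi a b c d + s * bianchi a b d c

lemma isACT_toCurv {S : Fin n → Fin n → Fin n → Fin n → ℝ} (hS : IsSACT S) :
    IsACT (toCurv S) := by
  obtain ⟨symm₁, symm₂, pair, cyclic⟩ := hS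
  set s := (Real.sqrt 3)⁻¹
  refine ⟨fun a b c d => ?_, fun a b c d => ?_, fun a b c d => ?_, fun a b c d => ?_⟩ <;>
    simp only [toCurv]
  · linear_combination (-s) * pair b c a d + s * pair b d a c
  · ring
  · linear_combination s * symm₁ a c d b + s * symm₂ a c b d - s * symm₁ b c d a -
      s * symm₂ b c a d - s * pair a d b c
  · linear_combination (-s) * symm₂ a c b d + s * symm₂ a d b c + s * symm₂ a b c d

lemma toCurv_toSym {R : Fin n → Fin n → Fin n → Fin n → ℝ} (hR : IsACT R) :
    toCurv (toSym R) = R := by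
  obtain ⟨-, anti₂, -, bianchi⟩ := hR
  funext a b c d
  rw [toCurv_toSym_apply]
  linear_combination 3⁻¹ * anti₂ a d b c - 3⁻¹ * anti₂ a b c d - 3⁻¹ * bianchi a b c d

lemma toSym_toCurv {S : Fin n → Fin n → Fin n → Fin n → ℝ} (hS : IsSACT S) :
    toSym (toCurv S) = S := by
  obtain ⟨-, symm₂, -, cyclic⟩ := hS
  funext a b c d
  rw [toSym_toCurv_apply]
  linear_combination 3⁻¹ * symm₂ a b c d - 3⁻¹ * symm₂ a d b c - 3⁻¹ * cyclic a b c d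

end

/-- the two maps define mutually inverse (linear) isomorphisms
between algebraic curvature tensors and symmetrised algebraic curvature tensors. -/
theorem act_sact_isomorphism {n : ℕ} :
    (∀ R : Fin n → Fin n → Fin n → Fin n → ℝ,
        IsACT R → IsSACT (toSym R) ∧ toCurv (toSym R) = R) ∧
    (∀ S : Fin n → Fin n → Fin n → Fin n → ℝ,
        IsSACT S → IsACT (toCurv S) ∧ toSym (toCurv S) = S) :=
  ⟨fun _ hR => ⟨isSACT_toSym hR, toCurv_toSym hR⟩,
    fun _ hS => ⟨isACT_toCurv hS, toSym_toCurv hS⟩⟩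
end

section
/- If a tensor S ∈ (V*)^⊗4 vanishes whenever evaluated as S_{a₁a₂b₁b₂} x^{a₁} x^{a₂} y^{b₁} z^{b₂} = 0 for all x, y, z ∈ V, and S is symmetric in its first two indices, symmetric in its last two indices, and satisfies pair symmetry and the Bianchi identity, then S = 0. -/
/-!
Fixing `y = e_c` and `z = e_d` leaves the quadratic form of the symmetric matrix
`S · · c d`, and over a ring in which `2` is cancellable a symmetric bilinear form is
recovered from its quadratic form by polarisation: evaluating at `e_a + e_b` gives `2 S_{abcd}`.
-/

open Finset

variable {ι R : Type*} [Fintype ι] [DecidableEq ι] [CommRing R]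

theorem sum_sum_mul_single_mul_single (M : ι → ι → R) (a : ι) :
    ∑ i, ∑ j, M i j * (Pi.single a 1 : ι → R) i * (Pi.single a 1 : ι → R) j =
      M a a := by
  simp [Pi.single_apply]

theorem sum_sum_mul_single_add_single (M : ι → ι → R) (a b : ι) :
    ∑ i, ∑ j, M i j * (Pi.single a 1 + Pi.single b 1 : ι → R) i *
        (Pi.single a 1 + Pi.single b 1 : ι → R) j =
      M a a + M a b + M b a + M b b := by
  simp [Pi.single_apply, mul_add, sum_add_distrib]
  ring

theorem eq_zero_of_symm_of_quadratic_eq_zero [NoZeroDivisors R] [NeZero (2 : R)]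
    {M : ι → ι → R} (hM : ∀ a b, M b a = M a b)
    (hquad : ∀ x : ι → R, ∑ i, ∑ j, M i j * x i * x j = 0) : M = 0 := by
  have hdiag (a : ι) : M a a = 0 := by
    simpa only [sum_sum_mul_single_mul_single] using hquad (Pi.single a 1)
  funext a b
  have hpolar : 2 * M a b = 0 := by
    have := hquad (Pi.single a 1 + Pi.single b 1)
    rw [sum_sum_mul_single_add_single, hdiag, hdiag, hM a b] at this
    linear_combination this
  exact (mul_eq_zero.mp hpolar).resolve_left two_ne_zero

theorem sum_sum_sum_sum_mul_single_mul_single (S : ι → ι → ι → ι → R) (x : ι → R) (c d : ι) :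
    ∑ a₁, ∑ a₂, ∑ b₁, ∑ b₂, S a₁ a₂ b₁ b₂ * x a₁ * x a₂ * (Pi.single c 1 : ι → R) b₁ *
        (Pi.single d 1 : ι → R) b₂ =
      ∑ a₁, ∑ a₂, S a₁ a₂ c d * x a₁ * x a₂ := by
  simp [Pi.single_apply]

theorem sact_eval_injective_general {n : ℕ}
    (S : Fin n → Fin n → Fin n → Fin n → ℝ)
    (hsym1 : ∀ a b c d, S b a c d = S a b c d)
    (hvanish : ∀ x y z : Fin n → ℝ,
      (∑ a₁, ∑ a₂, ∑ b₁, ∑ b₂, S a₁ a₂ b₁ b₂ * x a₁ * x a₂ * y b₁ * z b₂) = 0) :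
    S = 0 := by
  funext a b c d
  have hslice : (fun i j => S i j c d) = 0 :=
    eq_zero_of_symm_of_quadratic_eq_zero (fun i j => hsym1 i j c d) fun x => by
      rw [← sum_sum_sum_sum_mul_single_mul_single]
      exact hvanish x _ _
  exact congrFun (congrFun hslice a) b

/-- a symmetrised algebraic curvature tensor all of whose evaluations
S_{a₁a₂b₁b₂} x^{a₁} x^{a₂} y^{b₁} z^{b₂} vanish is zero. -/
theorem sact_eval_injective {n : ℕ}
    (S : Fin n → Fin n → Fin n → Fin n → ℝ)
    (hsym1 : ∀ a b c d, S b a c d = S a b c d)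
    (hsym2 : ∀ a b c d, S a b d c = S a b c d)
    (hpair : ∀ a b c d, S c d a b = S a b c d)
    (hbianchi : ∀ a b c d, S a b c d + S a d b c + S a c d b = 0)
    (hvanish : ∀ x y z : Fin n → ℝ,
      (∑ a₁, ∑ a₂, ∑ b₁, ∑ b₂, S a₁ a₂ b₁ b₂ * x a₁ * x a₂ * y b₁ * z b₂) = 0) :
    S = 0 :=
  sact_eval_injective_general S hsym1 hvanish
end

section
/- Let A, B, C ∈ Sym²(V*) be symmetric bilinear forms. Then antisymmetrising the tensor A_{a₁a₂}B_{b₁b₂}C_{c₁c₂}C_{d₁d₂} over the four indices a₂,b₂,c₂,d₂ and simultaneously symmetrising over the four indices a₁,b₁,c₁,d₁ yields zero. -/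
open Equiv Finset

theorem sum_sum_eq_zero_of_mul_right_eq_neg {G M : Type*} [Group G] [Fintype G] [AddCommGroup M]
    {τ : G} (hτ : τ ≠ 1) (hττ : τ * τ = 1) (f : G → G → M)
    (hf : ∀ σ ρ, f (σ * τ) (ρ * τ) = -f σ ρ) :
    ∑ σ, ∑ ρ, f σ ρ = 0 := by
  rw [← Fintype.sum_prod_type']
  refine sum_ninvolution (fun x ↦ (x.1 * τ, x.2 * τ)) (fun x ↦ by simp [hf]) (fun x _ ↦ ?_)
    (fun _ ↦ mem_univ _) (fun x ↦ by simp [mul_assoc, hττ])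
  simpa [Prod.ext_iff] using hτ

variable {R α β : Type*} [CommRing R]

def symAltTerm (A B C : α → β → R) (p : Fin 4 → α) (q : Fin 4 → β) (σ ρ : Perm (Fin 4)) : R :=
  ((Perm.sign ρ : ℤ) : R) *
    (A (p (σ 0)) (q (ρ 0)) * B (p (σ 1)) (q (ρ 1)) * C (p (σ 2)) (q (ρ 2)) * C (p (σ 3)) (q (ρ 3)))

/-- Exchanging the two `C` factors fixes the product but is odd in the antisymmetrised indices. -/
theorem symAltTerm_mul_swap (A B C : α → β → R) (p : Fin 4 → α) (q : Fin 4 → β)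
    (σ ρ : Perm (Fin 4)) :
    symAltTerm A B C p q (σ * swap 2 3) (ρ * swap 2 3) = -symAltTerm A B C p q σ ρ := by
  have hsign : Perm.sign (ρ * swap 2 3) = -Perm.sign ρ := by
    rw [Perm.sign_mul, Perm.sign_swap (by decide), mul_neg_one]
  simp only [symAltTerm, hsign, Perm.mul_apply, Units.val_neg, Int.cast_neg]
  simp only [show swap (2 : Fin 4) 3 0 = 0 by decide, show swap (2 : Fin 4) 3 1 = 1 by decide,
    swap_apply_left, swap_apply_right]
  ring

theorem symAlt_ABCC_vanishes_general {n : ℕ} (A B C : Fin n → Fin n → ℝ)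
    (p q : Fin 4 → Fin n) :
    (∑ σ : Equiv.Perm (Fin 4), ∑ ρ : Equiv.Perm (Fin 4),
        ((Equiv.Perm.sign ρ : ℤ) : ℝ) *
          (A (p (σ 0)) (q (ρ 0)) * B (p (σ 1)) (q (ρ 1))
            * C (p (σ 2)) (q (ρ 2)) * C (p (σ 3)) (q (ρ 3))))
      = 0 :=
  sum_sum_eq_zero_of_mul_right_eq_neg (swap_eq_one_iff.not.2 (by decide)) (swap_mul_self 2 3)
    (symAltTerm A B C p q) (symAltTerm_mul_swap A B C p q)

/-- antisymmetrising A_{a₁a₂}B_{b₁b₂}C_{c₁c₂}C_{d₁d₂} over the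
indices a₂,b₂,c₂,d₂ while symmetrising over a₁,b₁,c₁,d₁ yields zero, for
symmetric bilinear forms A, B, C.  Here p lists the values of (a₁,b₁,c₁,d₁) and
q those of (a₂,b₂,c₂,d₂). -/
theorem symAlt_ABCC_vanishes {n : ℕ} (A B C : Fin n → Fin n → ℝ)
    (hA : ∀ a b, A a b = A b a) (hB : ∀ a b, B a b = B b a)
    (hC : ∀ a b, C a b = C b a)
    (p q : Fin 4 → Fin n) :
    (∑ σ : Equiv.Perm (Fin 4), ∑ ρ : Equiv.Perm (Fin 4),
        ((Equiv.Perm.sign ρ : ℤ) : ℝ) *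
          (A (p (σ 0)) (q (ρ 0)) * B (p (σ 1)) (q (ρ 1))
            * C (p (σ 2)) (q (ρ 2)) * C (p (σ 3)) (q (ρ 3))))
      = 0 :=
  symAlt_ABCC_vanishes_general A B C p q
end

section
/- Every algebraic curvature tensor of the form R = λ₂ h⧆h + λ₁ h⧆g + λ₀ g⧆g, with h ∈ Sym²(V*) and λᵢ ∈ ℝ, satisfies the first algebraic integrability condition: the complete antisymmetrisation over the indices a₂,b₂,c₂,d₂ of g^{ij} R_{i b₁ a₂ b₂} R_{j d₁ c₂ d₂} vanishes. -/
/-!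
`h ⧆ k` is the antisymmetrisation in its last two slots of `h x a * k b c + k x a * h b c`, so
`R x b a c = T_{b c} x a - T_{b a} x c`, where `T_{b c} = (2λ₂ h(b,c) + λ₁ g(b,c)) h
+ (λ₁ h(b,c) + 2λ₀ g(b,c)) g` lies in the pencil spanned by `h` and `g`. Under the total
alternation the two inner antisymmetrisations only contribute a factor `4`, leaving the
alternation of `(T_{b₁ b₂}ᵀ g⁻¹ T_{d₁ d₂})(a₂, c₂)`. For `X, Y` in the pencil, `Xᵀ g⁻¹ Y` is
symmetric (the mixed terms collapse to multiples of `h` and `g`), so this term is invariant under exchanging `a₂` and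
`c₂`, and its alternation vanishes.
-/

def kulkarniNomizu {n : ℕ} (h k : Fin n → Fin n → ℝ) :
    Fin n → Fin n → Fin n → Fin n → ℝ :=
  fun a₁ b₁ a₂ b₂ =>
    h a₁ a₂ * k b₁ b₂ - h a₁ b₂ * k b₁ a₂ - h b₁ a₂ * k a₁ b₂ + h b₁ b₂ * k a₁ a₂

open Equiv Finset Matrix

section Alternation

variable {ι α M : Type*} [Fintype ι] [DecidableEq ι]

def alternation [AddCommGroup M] (F : (ι → α) → M) (v : ι → α) : M :=
  ∑ σ : Perm ι, Perm.sign σ • F (v ∘ σ)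

theorem alternation_eq_sum_mul [Ring M] (F : (ι → α) → M) (v : ι → α) :
    alternation F v = ∑ σ : Perm ι, ((Perm.sign σ : ℤ) : M) * F (v ∘ σ) := by
  simp only [alternation, Units.smul_def, zsmul_eq_mul]

variable [AddCommGroup M]

theorem alternation_sub (F G : (ι → α) → M) (v : ι → α) :
    alternation (fun w => F w - G w) v = alternation F v - alternation G v := by
  simp only [alternation, smul_sub, sum_sub_distrib]

theorem alternation_comp_perm (F : (ι → α) → M) (τ : Perm ι) (v : ι → α) :
    alternation (fun w => F (w ∘ τ)) v = Perm.sign τ • alternation F v := by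
  rw [alternation, alternation, smul_sum, ← Equiv.sum_comp (Equiv.mulRight τ⁻¹)]
  refine sum_congr rfl fun σ _ => ?_
  rw [coe_mulRight, Function.comp_assoc, ← Perm.coe_mul, inv_mul_cancel_right, Perm.sign_mul,
    Perm.sign_inv, smul_smul, mul_comm]

theorem alternation_sub_comp_swap (G : (ι → α) → M) {i j : ι} (hij : i ≠ j) (v : ι → α) :
    alternation (fun w => G w - G (w ∘ swap i j)) v = 2 • alternation G v := by
  rw [alternation_sub, alternation_comp_perm, Perm.sign_swap hij, Units.neg_smul, one_smul,
    sub_neg_eq_add, two_smul]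

theorem alternation_eq_zero_of_comp_swap [IsAddTorsionFree M] {F : (ι → α) → M} {i j : ι}
    (hij : i ≠ j) (hF : ∀ w, F (w ∘ swap i j) = F w) (v : ι → α) : alternation F v = 0 := by
  have h := alternation_comp_perm F (swap i j) v
  simp only [hF, Perm.sign_swap hij, Units.neg_smul, one_smul] at h
  exact self_eq_neg.mp h

end Alternation

section Contraction

variable {α R m : Type*} [CommRing R] [Fintype m]

theorem alternation_contract_antisymm (P : m → m → R) (Y Z : m → α → α → R) (v : Fin 4 → α) :
    alternation (fun w => ∑ i, ∑ j, P i j * (Y i (w 0) (w 1) - Y i (w 1) (w 0))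
        * (Z j (w 2) (w 3) - Z j (w 3) (w 2))) v
      = 4 • alternation (fun w => ∑ i, ∑ j, P i j * Y i (w 0) (w 1) * Z j (w 2) (w 3)) v := by
  set G : (Fin 4 → α) → R := fun w => ∑ i, ∑ j, P i j * Y i (w 0) (w 1) * Z j (w 2) (w 3)
  set H : (Fin 4 → α) → R := fun w => G w - G (w ∘ swap 0 1)
  have hH : (fun w : Fin 4 → α => ∑ i, ∑ j, P i j * (Y i (w 0) (w 1) - Y i (w 1) (w 0))
      * (Z j (w 2) (w 3) - Z j (w 3) (w 2))) = fun w => H w - H (w ∘ swap 2 3) := by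
    funext w
    simp only [H, G, mul_sub, sub_mul, sum_sub_distrib, Function.comp_apply, swap_apply_left,
      swap_apply_right, ne_eq, Fin.reduceEq, not_false_eq_true, swap_apply_of_ne_of_ne]
  rw [hH, alternation_sub_comp_swap H (by decide), alternation_sub_comp_swap G (by decide),
    smul_smul]
  norm_num

theorem sum_sum_mul_mul_eq_transpose_mul_of_mul (P : m → m → R) (X Y : Matrix m m R)
    (a c : m) :
    ∑ i, ∑ j, P i j * X i a * Y j c = (Xᵀ * of P * Y) a c := by
  simp only [mul_apply, transpose_apply, of_apply, sum_mul]
  rw [sum_comm]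
  exact sum_congr rfl fun j _ => sum_congr rfl fun i _ => by ring

theorem isSymm_pencil_transpose_mul_mul [DecidableEq m] {g h P : Matrix m m R} (hg : g.IsSymm)
    (hh : h.IsSymm) (hgP : g * P = 1) (r s r' s' : R) :
    ((r • h + s • g)ᵀ * P * (r' • h + s' • g)).IsSymm := by
  have hPg : P * g = 1 := mul_eq_one_comm.mp hgP
  have hP : P.IsSymm := inv_eq_right_inv hgP ▸ hg.inv
  have hPh : (h * P * h).IsSymm := by
    simp only [IsSymm, transpose_mul, hh.eq, hP.eq, Matrix.mul_assoc]
  have expand : (r • h + s • g)ᵀ * P * (r' • h + s' • g)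
      = (r * r') • (h * P * h) + (r * s' + s * r') • h + (s * s') • g := by
    simp only [transpose_add, transpose_smul, hh.eq, hg.eq, Matrix.add_mul, Matrix.mul_add,
      Matrix.smul_mul, Matrix.mul_smul, Matrix.mul_assoc, hPg, Matrix.mul_one]
    simp only [← Matrix.mul_assoc g P, hgP, Matrix.one_mul]
    module
  rw [expand]
  exact ((hPh.smul _).add (hh.smul _)).add (hg.smul _)

theorem alternation_contract_eq_zero_of_isSymm [IsAddTorsionFree R] (P : m → m → R)
    (X Y : m → Matrix m m R) (hXY : ∀ b d, ((X b)ᵀ * of P * Y d).IsSymm) (v : Fin 4 → m) :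
    alternation (fun w => ∑ i, ∑ j, P i j * X (w 1) i (w 0) * Y (w 3) j (w 2)) v = 0 := by
  refine alternation_eq_zero_of_comp_swap (i := 0) (j := 2) (by decide) (fun w => ?_) v
  simp only [Function.comp_apply, swap_apply_left, swap_apply_right, ne_eq, Fin.reduceEq,
    not_false_eq_true, swap_apply_of_ne_of_ne]
  rw [sum_sum_mul_mul_eq_transpose_mul_of_mul, sum_sum_mul_mul_eq_transpose_mul_of_mul,
    (hXY _ _).apply]

end Contraction

def familyPrimitive {n : ℕ} (g h : Fin n → Fin n → ℝ) (lam0 lam1 lam2 : ℝ) (b c : Fin n) :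
    Matrix (Fin n) (Fin n) ℝ :=
  (2 * lam2 * h b c + lam1 * g b c) • of h + (lam1 * h b c + 2 * lam0 * g b c) • of g

theorem kulkarniNomizu_family_eq_sub {n : ℕ} (g h : Fin n → Fin n → ℝ) (lam0 lam1 lam2 : ℝ)
    (x b a c : Fin n) :
    lam2 * kulkarniNomizu h h x b a c + lam1 * kulkarniNomizu h g x b a c
        + lam0 * kulkarniNomizu g g x b a c
      = familyPrimitive g h lam0 lam1 lam2 b c x a
        - familyPrimitive g h lam0 lam1 lam2 b a x c := by
  simp only [familyPrimitive, kulkarniNomizu, Matrix.add_apply, Matrix.smul_apply, of_apply,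
    smul_eq_mul]
  ring

/-- every algebraic curvature tensor of the form
R = λ₂ h⧆h + λ₁ h⧆g + λ₀ g⧆g satisfies the first algebraic integrability
condition: the complete antisymmetrisation over a₂,b₂,c₂,d₂ (listed by q) of
g^{ij} R_{i b₁ a₂ b₂} R_{j d₁ c₂ d₂} vanishes. -/
theorem family_first_integrability {n : ℕ}
    (g ginv h : Fin n → Fin n → ℝ)
    (hgsym : ∀ a b, g a b = g b a)
    (hginv : ∀ i j, (∑ k, g i k * ginv k j) = if i = j then 1 else 0)
    (hhsym : ∀ a b, h a b = h b a)
    (lam0 lam1 lam2 : ℝ)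
    (R : Fin n → Fin n → Fin n → Fin n → ℝ)
    (hR : R = fun a₁ b₁ a₂ b₂ =>
      lam2 * kulkarniNomizu h h a₁ b₁ a₂ b₂ + lam1 * kulkarniNomizu h g a₁ b₁ a₂ b₂
        + lam0 * kulkarniNomizu g g a₁ b₁ a₂ b₂)
    (b₁ d₁ : Fin n) (q : Fin 4 → Fin n) :
    (∑ ρ : Equiv.Perm (Fin 4), ((Equiv.Perm.sign ρ : ℤ) : ℝ) *
        (∑ i, ∑ j, ginv i j * R i b₁ (q (ρ 0)) (q (ρ 1)) * R j d₁ (q (ρ 2)) (q (ρ 3))))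
      = 0 := by
  set T := familyPrimitive g h lam0 lam1 lam2
  have hRT : ∀ x b a c, R x b a c = T b c x a - T b a x c := by
    subst hR
    exact kulkarniNomizu_family_eq_sub g h lam0 lam1 lam2
  have hg : (of g).IsSymm := IsSymm.ext fun i j => hgsym j i
  have hh : (of h).IsSymm := IsSymm.ext fun i j => hhsym j i
  have hgginv : of g * of ginv = 1 := by
    ext i j
    rw [mul_apply, one_apply]
    exact hginv i j
  have hF := alternation_contract_antisymm ginv (fun x a c => T b₁ c x a)
    (fun x a c => T d₁ c x a) q
  rw [alternation_contract_eq_zero_of_isSymm ginv (T b₁) (T d₁)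
    (fun _ _ => isSymm_pencil_transpose_mul_mul hg hh hgginv _ _ _ _), smul_zero,
    alternation_eq_sum_mul] at hF
  simpa only [Function.comp_apply, ← hRT] using hF
end

section
/- With f_A : M → M, f_A(x) = Ax/‖Ax‖ on the unit sphere M of an (n+1)-dimensional inner product space V, the ratio of the determinant of the pullback metric f_A*g to that of g at x ∈ M equals (det A / ‖Ax‖^{n+1})². -/
/-!
Extend the differential of `f_A` at `x` by sending the normal `x` to the normal `A x / ‖A x‖`.
The result is `‖A x‖⁻¹ • A ∘ τ` with `τ` a transvection fixing `x`, so its determinant is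
`det A / ‖A x‖ ^ (n + 1)`. On the orthonormal basis `(x, e)` it takes the values
`(A x / ‖A x‖, df e)`, whose first vector is a unit vector orthogonal to the others; hence the
Gram determinant of `df e` is that of the image of an orthonormal basis, i.e. the squared
determinant.
-/

open RealInnerProductSpace Matrix

theorem orthonormal_fin_cons {𝕜 E : Type*} [RCLike 𝕜]
    [NormedAddCommGroup E] [InnerProductSpace 𝕜 E] {n : ℕ} {x : E} {e : Fin n → E}
    (hx : ‖x‖ = 1) (he : Orthonormal 𝕜 e) (hxe : ∀ i, inner 𝕜 x (e i) = 0) :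
    Orthonormal 𝕜 (Fin.cons x e : Fin (n + 1) → E) := by
  refine ⟨Fin.cases hx he.1, fun i j hij => ?_⟩
  cases i using Fin.cases <;> cases j using Fin.cases
  · exact absurd rfl hij
  · simpa using hxe _
  · simpa [inner_eq_zero_symm] using hxe _
  · simpa using he.2 (Fin.succ_injective _ |>.ne_iff.mp hij)

theorem det_gram_fin_cons_of_forall_inner_eq_zero {𝕜 E : Type*} [RCLike 𝕜]
    [NormedAddCommGroup E] [InnerProductSpace 𝕜 E] {n : ℕ} (v : E) (w : Fin n → E)
    (h : ∀ i, inner 𝕜 v (w i) = 0) :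
    (gram 𝕜 (Fin.cons v w : Fin (n + 1) → E)).det = inner 𝕜 v v * (gram 𝕜 w).det := by
  rw [det_succ_row_zero, Fin.sum_univ_succ, Finset.sum_eq_zero fun j _ => by simp [gram_apply, h]]
  simp only [Fin.val_zero, pow_zero, one_mul, add_zero, Fin.succAbove_zero, gram_apply,
    Fin.cons_zero]
  rfl

section

variable {V : Type*} [NormedAddCommGroup V] [InnerProductSpace ℝ V]

theorem det_gram_comp_orthonormalBasis {ι : Type*} [Fintype ι] [DecidableEq ι]
    (b : OrthonormalBasis ι ℝ V) (T : V →ₗ[ℝ] V) :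
    (gram ℝ (T ∘ b)).det = T.det ^ 2 := by
  rw [gram_eq_conjTranspose_mul b, det_mul, det_conjTranspose,
    ← LinearMap.det_toMatrix b.toBasis T, star_trivial, sq]
  congr <;> ext <;> simp [LinearMap.toMatrix_apply]

theorem inner_inner_self_smul_sub_inner_smul_self (a b : V) :
    ⟪a, ⟪a, a⟫ • b - ⟪a, b⟫ • a⟫ = 0 := by
  rw [inner_sub_right, real_inner_smul_right, real_inner_smul_right, mul_comm, sub_self]

/-- For a unit vector `x`, this agrees with the differential of `y ↦ A y / ‖A y‖` at `x` on `x^⊥`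
and sends `x` to `A x / ‖A x‖`. -/
noncomputable def extendedDiff (A : V →ₗ[ℝ] V) (x : V) : V →ₗ[ℝ] V :=
  ‖A x‖⁻¹ • A ∘ₗ LinearMap.transvection (innerₛₗ ℝ x - (‖A x‖ ^ 2)⁻¹ • innerₛₗ ℝ (A x) ∘ₗ A) x

theorem extendedDiff_apply (A : V →ₗ[ℝ] V) (x y : V) :
    extendedDiff A x y =
      ‖A x‖⁻¹ • A y + (‖A x‖⁻¹ * (⟪x, y⟫ - (‖A x‖ ^ 2)⁻¹ * ⟪A x, A y⟫)) • A x := by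
  simp [extendedDiff, LinearMap.transvection.apply, smul_add, smul_smul]

theorem extendedDiff_apply_self (A : V →ₗ[ℝ] V) {x : V} (hx : ‖x‖ = 1) (hAx : A x ≠ 0) :
    extendedDiff A x x = ‖A x‖⁻¹ • A x := by
  simp [extendedDiff_apply, hx, hAx]

theorem extendedDiff_apply_of_inner_eq_zero (A : V →ₗ[ℝ] V) {x y : V} (hAx : A x ≠ 0)
    (hxy : ⟪x, y⟫ = 0) :
    extendedDiff A x y = (‖A x‖ ^ 3)⁻¹ • (⟪A x, A x⟫ • A y - ⟪A x, A y⟫ • A x) := by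
  rw [extendedDiff_apply, hxy, real_inner_self_eq_norm_sq]
  match_scalars
  · field_simp
  · ring

theorem det_extendedDiff [FiniteDimensional ℝ V] (A : V →ₗ[ℝ] V) {x : V} (hx : ‖x‖ = 1)
    (hAx : A x ≠ 0) :
    (extendedDiff A x).det = A.det / ‖A x‖ ^ Module.finrank ℝ V := by
  have hx_isotropic : (innerₛₗ ℝ x - (‖A x‖ ^ 2)⁻¹ • innerₛₗ ℝ (A x) ∘ₗ A) x = 0 := by
    simp [hx, hAx]
  rw [extendedDiff, LinearMap.det_smul, LinearMap.det_comp, LinearMap.transvection.det,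
    hx_isotropic]
  simp [div_eq_inv_mul]

end

/-- for f_A(x) = Ax/‖Ax‖ on the unit sphere of an (n+1)-dimensional
inner product space, the ratio of the determinant of the pullback metric f_A*g
to that of g at x (computed in an orthonormal basis e of T_xM) equals
(det A / ‖Ax‖^{n+1})². -/
theorem pullback_metric_det_ratio {V : Type*} [NormedAddCommGroup V]
    [InnerProductSpace ℝ V] [FiniteDimensional ℝ V] (n : ℕ)
    (hdim : Module.finrank ℝ V = n + 1)
    (A : V ≃ₗ[ℝ] V) (x : V) (hx : ⟪x, x⟫ = 1)
    (e : Fin n → V) (he : Orthonormal ℝ e) (hex : ∀ i, ⟪x, e i⟫ = 0)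
    (df : V → V)
    (hdf : df = fun v => (‖A x‖ ^ 3)⁻¹ • (⟪A x, A x⟫ • A v - ⟪A x, A v⟫ • A x)) :
    Matrix.det (Matrix.of fun i j : Fin n => ⟪df (e i), df (e j)⟫)
        / Matrix.det (Matrix.of fun i j : Fin n => ⟪e i, e j⟫)
      = (LinearMap.det (A : V →ₗ[ℝ] V) / ‖A x‖ ^ (n + 1)) ^ 2 := by
  have hx1 : ‖x‖ = 1 := by
    rw [← pow_eq_one_iff_of_nonneg (norm_nonneg x) two_ne_zero, ← real_inner_self_eq_norm_sq, hx]
  have hAx : A x ≠ 0 := A.map_ne_zero_iff.mpr (norm_ne_zero_iff.mp (by simp [hx1]))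
  set u := ‖A x‖⁻¹ • A x
  have hu : ⟪u, u⟫ = 1 := by
    rw [real_inner_smul_left, real_inner_smul_right, real_inner_self_eq_norm_sq]
    field_simp [norm_ne_zero_iff.mpr hAx]
  have hu_orth (i : Fin n) : ⟪u, df (e i)⟫ = 0 := by
    simp only [u, hdf, real_inner_smul_left, real_inner_smul_right,
      inner_inner_self_smul_sub_inner_smul_self, mul_zero]
  have hon := orthonormal_fin_cons hx1 he hex
  let b : OrthonormalBasis (Fin (n + 1)) ℝ V := .mk hon
    (hon.linearIndependent.span_eq_top_of_card_eq_finrank' (by simp [hdim])).ge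
  have hTb : extendedDiff A x ∘ b = Fin.cons u (df ∘ e) := by
    ext i
    cases i using Fin.cases
    · simpa [b] using extendedDiff_apply_self (A : V →ₗ[ℝ] V) hx1 hAx
    · simpa [b, hdf] using extendedDiff_apply_of_inner_eq_zero (A : V →ₗ[ℝ] V) hAx (hex _)
  calc (gram ℝ (df ∘ e)).det / (gram ℝ e).det
      = (gram ℝ (Fin.cons u (df ∘ e) : Fin (n + 1) → V)).det := by
        rw [gram_eq_one_iff_orthonormal.mpr he, det_one, div_one,
          det_gram_fin_cons_of_forall_inner_eq_zero u (df ∘ e) hu_orth, hu, one_mul]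
    _ = (LinearMap.det (A : V →ₗ[ℝ] V) / ‖A x‖ ^ (n + 1)) ^ 2 := by
        rw [← hTb, det_gram_comp_orthonormalBasis, det_extendedDiff _ hx1 hAx, hdim]
        rfl
end
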